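/- arXiv:2310.05661 — 9 statements merged into one kernel-verified Lean document; each statement's English description precedes it below -/
import Mathlib

section
/- Every thesis of Łukasiewicz's calculus is a traditional set-theoretic tautology (soundness): if α is derivable from the axioms (I a), (I i), Barbara, Datisi, (df e), (df o) and classical tautologies by modus ponens and substitution, then α is true in every traditional model. -/
inductive LForm : Type
  | atomA : Nat → Nat → LForm
  | atomI : Nat → Nat → LForm
  | atomE : Nat → Nat → LForm
  | atomO : Nat → Nat → LForm
  | neg : LForm → LForm
  | conj : LForm → LForm → LForm
  | disj : LForm → LForm → LForm
  | impl : LForm → LForm → LForm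
  | equiv : LForm → LForm → LForm

namespace LForm

/-- Boolean evaluation of a formula given a Boolean valuation of the atoms. -/
def beval (vA vI vE vO : Nat → Nat → Bool) : LForm → Bool
  | atomA s p => vA s p
  | atomI s p => vI s p
  | atomE s p => vE s p
  | atomO s p => vO s p
  | neg φ => !(beval vA vI vE vO φ)
  | conj φ ψ => beval vA vI vE vO φ && beval vA vI vE vO ψ
  | disj φ ψ => beval vA vI vE vO φ || beval vA vI vE vO ψ
  | impl φ ψ => !(beval vA vI vE vO φ) || beval vA vI vE vO ψ
  | equiv φ ψ => beval vA vI vE vO φ == beval vA vI vE vO ψ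

/-- Substitution instances of classical propositional tautologies. -/
def Taut (φ : LForm) : Prop := ∀ vA vI vE vO, beval vA vI vE vO φ = true

/-- Uniform substitution of name letters. -/
def rename (σ : Nat → Nat) : LForm → LForm
  | atomA s p => atomA (σ s) (σ p)
  | atomI s p => atomI (σ s) (σ p)
  | atomE s p => atomE (σ s) (σ p)
  | atomO s p => atomO (σ s) (σ p)
  | neg φ => neg (rename σ φ)
  | conj φ ψ => conj (rename σ φ) (rename σ ψ)
  | disj φ ψ => disj (rename σ φ) (rename σ ψ)
  | impl φ ψ => impl (rename σ φ) (rename σ ψ)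
  | equiv φ ψ => equiv (rename σ φ) (rename σ ψ)

/-- Set-theoretic interpretation in a model given by a denotation function. -/
def eval {α : Type} (D : Nat → Set α) : LForm → Prop
  | atomA s p => D s ⊆ D p
  | atomI s p => (D s ∩ D p).Nonempty
  | atomE s p => ¬ (D s ∩ D p).Nonempty
  | atomO s p => ¬ D s ⊆ D p
  | neg φ => ¬ eval D φ
  | conj φ ψ => eval D φ ∧ eval D ψ
  | disj φ ψ => eval D φ ∨ eval D ψ
  | impl φ ψ => eval D φ → eval D ψ
  | equiv φ ψ => eval D φ ↔ eval D ψ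

/-- Derivability from a set of specific axioms, over classical propositional
logic, with modus ponens and uniform substitution. -/
inductive Deriv (Ax : LForm → Prop) : LForm → Prop
  | ax {φ} : Ax φ → Deriv Ax φ
  | taut {φ} : Taut φ → Deriv Ax φ
  | mp {φ ψ} : Deriv Ax (impl φ ψ) → Deriv Ax φ → Deriv Ax ψ
  | subst {φ} (σ : Nat → Nat) : Deriv Ax φ → Deriv Ax (rename σ φ)

/-- The specific axioms of Łukasiewicz's calculus. -/
def LukAx : LForm → Prop := fun φ =>
  (∃ S, φ = atomA S S) ∨
  (∃ S, φ = atomI S S) ∨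
  (∃ M P S, φ = impl (conj (atomA M P) (atomA S M)) (atomA S P)) ∨
  (∃ M P S, φ = impl (conj (atomA M P) (atomI M S)) (atomI S P)) ∨
  (∃ S P, φ = equiv (atomE S P) (neg (atomI S P))) ∨
  (∃ S P, φ = equiv (atomO S P) (neg (atomA S P)))

/-- The specific axioms of Shepherdson's system Sh. -/
def ShAx : LForm → Prop := fun φ =>
  (∃ S, φ = atomA S S) ∨
  (∃ M P S, φ = impl (conj (atomA M P) (atomA S M)) (atomA S P)) ∨
  (∃ M P S, φ = impl (conj (atomA M P) (atomI M S)) (atomI S P)) ∨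
  (∃ S P, φ = impl (atomI S P) (atomI S S)) ∨
  (∃ S P, φ = impl (neg (atomI S S)) (atomA S P)) ∨
  (∃ S P, φ = equiv (atomE S P) (neg (atomI S P))) ∨
  (∃ S P, φ = equiv (atomO S P) (neg (atomA S P)))

end LForm

open LForm

lemma eval_beval {α : Type} (D : Nat → Set α)
    (vA vI vE vO : Nat → Nat → Bool)
    (hA : ∀ s p, vA s p = true ↔ D s ⊆ D p)
    (hI : ∀ s p, vI s p = true ↔ (D s ∩ D p).Nonempty)
    (hE : ∀ s p, vE s p = true ↔ ¬ (D s ∩ D p).Nonempty)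
    (hO : ∀ s p, vO s p = true ↔ ¬ D s ⊆ D p)
    (φ : LForm) :
    eval D φ ↔ beval vA vI vE vO φ = true := by
  induction φ with
  | atomA s p => simpa [eval, beval] using (hA s p).symm
  | atomI s p => simpa [eval, beval] using (hI s p).symm
  | atomE s p => simpa [eval, beval] using (hE s p).symm
  | atomO s p => simpa [eval, beval] using (hO s p).symm
  | neg φ ih => simp [eval, beval, ih]
  | conj φ ψ ih1 ih2 => simp [eval, beval, ih1, ih2]
  | disj φ ψ ih1 ih2 => simp [eval, beval, ih1, ih2]
  | impl φ ψ ih1 ih2 =>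
      cases h1 : beval vA vI vE vO φ <;> cases h2 : beval vA vI vE vO ψ <;>
        simp_all [eval, beval]
  | equiv φ ψ ih1 ih2 =>
      cases h1 : beval vA vI vE vO φ <;> cases h2 : beval vA vI vE vO ψ <;>
        simp_all [eval, beval]

lemma eval_rename {α : Type} (D : Nat → Set α) (σ : Nat → Nat) (φ : LForm) :
    eval D (rename σ φ) ↔ eval (fun n => D (σ n)) φ := by
  induction φ <;> simp [eval, rename, *]

/-- Soundness of Łukasiewicz's calculus: every thesis is true in every
traditional model (nonempty universe, all denotations nonempty). -/
theorem lukasiewicz_sound (φ : LForm) (h : Deriv LukAx φ) :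
    ∀ (U : Type), Nonempty U → ∀ D : Nat → Set U,
      (∀ n, (D n).Nonempty) → eval D φ := by
  induction h with
  | ax hax =>
    intro U _ D hD
    rcases hax with ⟨S, rfl⟩ | ⟨S, rfl⟩ | ⟨M, P, S, rfl⟩ | ⟨M, P, S, rfl⟩ |
      ⟨S, P, rfl⟩ | ⟨S, P, rfl⟩
    · exact subset_rfl
    · simpa [eval] using hD S
    · rintro ⟨h1, h2⟩; exact h2.trans h1
    · rintro ⟨h1, ⟨x, hx1, hx2⟩⟩; exact ⟨x, hx2, h1 hx1⟩
    · exact Iff.rfl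
    · exact Iff.rfl
  | taut ht =>
    intro U _ D hD
    classical
    rw [eval_beval D (fun s p => decide (D s ⊆ D p))
      (fun s p => decide (D s ∩ D p).Nonempty)
      (fun s p => decide (¬ (D s ∩ D p).Nonempty))
      (fun s p => decide (¬ D s ⊆ D p))
      (by simp) (by simp) (by simp) (by simp)]
    exact ht _ _ _ _
  | mp _ _ ih1 ih2 =>
    intro U hU D hD
    exact (ih1 U hU D hD) (ih2 U hU D hD)
  | subst σ _ ih =>
    intro U hU D hD
    rw [eval_rename]
    exact ih U hU _ (fun n => hD (σ n))
end

section
/- Every thesis of Łukasiewicz's calculus is true in every traditional model, and conversely (completeness): a formula is a thesis of Łukasiewicz's calculus if and only if it is a traditional set-theoretic tautology. -/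
namespace LForm

open Set

def bevalAI (A I : ℕ → ℕ → Bool) : LForm → Bool :=
  beval A I (fun s p => !I s p) (fun s p => !A s p)

theorem eval_iff_bevalAI {U : Type} {D : ℕ → Set U} {A I : ℕ → ℕ → Bool}
    (hA : ∀ s p, D s ⊆ D p ↔ A s p) (hI : ∀ s p, (D s ∩ D p).Nonempty ↔ I s p) (φ : LForm) :
    eval D φ ↔ bevalAI A I φ := by
  unfold bevalAI
  induction φ <;> simp_all [eval, beval, imp_iff_not_or]

theorem eval_rename {U : Type} (D : ℕ → Set U) (σ : ℕ → ℕ) (φ : LForm) :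
    eval D (rename σ φ) ↔ eval (D ∘ σ) φ := by
  induction φ <;> simp_all [eval, rename]

theorem LukAx.eval {U : Type} {D : ℕ → Set U} (hD : ∀ n, (D n).Nonempty) {φ : LForm}
    (h : LukAx φ) : eval D φ := by
  rcases h with ⟨S, rfl⟩ | ⟨S, rfl⟩ | ⟨M, P, S, rfl⟩ | ⟨M, P, S, rfl⟩ | ⟨S, P, rfl⟩ | ⟨S, P, rfl⟩
  · exact subset_rfl
  · obtain ⟨x, hx⟩ := hD S
    exact ⟨x, hx, hx⟩
  · exact fun ⟨hMP, hSM⟩ => hSM.trans hMP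
  · exact fun ⟨hMP, x, hxM, hxS⟩ => ⟨x, hxS, hMP hxM⟩
  · exact Iff.rfl
  · exact Iff.rfl

theorem Deriv.eval {U : Type} {D : ℕ → Set U} (hD : ∀ n, (D n).Nonempty) {φ : LForm}
    (h : Deriv LukAx φ) : eval D φ := by
  classical
  induction h generalizing D with
  | ax hax => exact hax.eval hD
  | taut ht =>
    exact (eval_iff_bevalAI (A := fun s p => D s ⊆ D p) (I := fun s p => (D s ∩ D p).Nonempty)
      (by simp) (by simp) _).2 (ht _ _ _ _)
  | mp _ _ ih₁ ih₂ => exact ih₁ hD (ih₂ hD)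
  | subst σ _ ih => exact (eval_rename D σ _).2 (ih fun n => hD (σ n))

structure GoodOn (N : Set ℕ) (A I : ℕ → ℕ → Bool) : Prop where
  refl_a : ∀ n ∈ N, A n n
  refl_i : ∀ n ∈ N, I n n
  barbara : ∀ m ∈ N, ∀ p ∈ N, ∀ s ∈ N, A m p → A s m → A s p
  datisi : ∀ m ∈ N, ∀ p ∈ N, ∀ s ∈ N, A m p → I m s → I s p

/-- `(s, p)` witnesses `s i p`, and `(n, n)` witnesses that `n` denotes a nonempty set. -/
def canonicalModel (A I : ℕ → ℕ → Bool) (n : ℕ) : Set (ℕ × ℕ) :=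
  {q | I q.1 q.2 ∧ (A q.1 n ∨ A q.2 n)}

namespace GoodOn

variable {A I : ℕ → ℕ → Bool}

theorem symm_i (h : GoodOn univ A I) {s p : ℕ} (hsp : I s p) : I p s :=
  h.datisi s trivial s trivial p trivial (h.refl_a s trivial) hsp

theorem canonicalModel_nonempty (h : GoodOn univ A I) (n : ℕ) : (canonicalModel A I n).Nonempty :=
  ⟨(n, n), h.refl_i n trivial, .inl (h.refl_a n trivial)⟩

theorem canonicalModel_subset_iff (h : GoodOn univ A I) (s p : ℕ) :
    canonicalModel A I s ⊆ canonicalModel A I p ↔ A s p := by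
  refine ⟨fun hsub => ?_, fun hsp q ⟨hq, hqs⟩ => ⟨hq, ?_⟩⟩
  · have hss : (s, s) ∈ canonicalModel A I s := ⟨h.refl_i s trivial, .inl (h.refl_a s trivial)⟩
    obtain ⟨-, hsp | hsp⟩ := hsub hss <;> exact hsp
  · exact hqs.imp (h.barbara s trivial p trivial _ trivial hsp)
      (h.barbara s trivial p trivial _ trivial hsp)

theorem i_of_mem_canonicalModel (h : GoodOn univ A I) {q : ℕ × ℕ} {n : ℕ}
    (hq : q ∈ canonicalModel A I n) : I q.1 n ∧ I q.2 n := by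
  obtain ⟨hq, hqn | hqn⟩ := hq
  · exact ⟨h.datisi _ trivial n trivial _ trivial hqn (h.refl_i _ trivial),
      h.datisi _ trivial n trivial _ trivial hqn hq⟩
  · exact ⟨h.datisi _ trivial n trivial _ trivial hqn (h.symm_i hq),
      h.datisi _ trivial n trivial _ trivial hqn (h.refl_i _ trivial)⟩

theorem canonicalModel_inter_nonempty_iff (h : GoodOn univ A I) (s p : ℕ) :
    (canonicalModel A I s ∩ canonicalModel A I p).Nonempty ↔ I s p := by
  refine ⟨fun ⟨q, hqs, _, hqp⟩ => ?_, fun hsp => ⟨(s, p), ⟨hsp, .inl (h.refl_a s trivial)⟩,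
    ⟨hsp, .inr (h.refl_a p trivial)⟩⟩⟩
  obtain ⟨h₁, h₂⟩ := h.i_of_mem_canonicalModel hqs
  rcases hqp with hqp | hqp
  · exact h.datisi _ trivial p trivial s trivial hqp h₁
  · exact h.datisi _ trivial p trivial s trivial hqp h₂

theorem eval_canonicalModel (h : GoodOn univ A I) (φ : LForm) :
    eval (canonicalModel A I) φ ↔ bevalAI A I φ :=
  eval_iff_bevalAI h.canonicalModel_subset_iff h.canonicalModel_inter_nonempty_iff φ

end GoodOn

def names : LForm → List ℕ
  | atomA s p | atomI s p | atomE s p | atomO s p => [s, p]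
  | neg φ => names φ
  | conj φ ψ | disj φ ψ | impl φ ψ | equiv φ ψ => names φ ++ names ψ

theorem beval_congr {vA vI vE vO vA' vI' vE' vO' : ℕ → ℕ → Bool} {φ : LForm}
    (h : ∀ s ∈ names φ, ∀ p ∈ names φ,
      vA s p = vA' s p ∧ vI s p = vI' s p ∧ vE s p = vE' s p ∧ vO s p = vO' s p) :
    beval vA vI vE vO φ = beval vA' vI' vE' vO' φ := by
  induction φ with
  | atomA | atomI | atomE | atomO => simp_all [names, beval]
  | neg φ ih => simp only [beval, ih h]
  | conj φ ψ ih₁ ih₂ | disj φ ψ ih₁ ih₂ | impl φ ψ ih₁ ih₂ | equiv φ ψ ih₁ ih₂ =>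
    simp only [names, List.mem_append] at h
    simp only [beval, ih₁ fun s hs p hp => h s (.inl hs) p (.inl hp),
      ih₂ fun s hs p hp => h s (.inr hs) p (.inr hp)]

def axiomInstances (N : List ℕ) : List LForm :=
  (N.map fun n => atomA n n) ++ (N.map fun n => atomI n n) ++
  (N.flatMap fun m => N.flatMap fun p => N.map fun s =>
    impl (conj (atomA m p) (atomA s m)) (atomA s p)) ++
  (N.flatMap fun m => N.flatMap fun p => N.map fun s =>
    impl (conj (atomA m p) (atomI m s)) (atomI s p)) ++
  (N.flatMap fun s => N.map fun p => equiv (atomE s p) (neg (atomI s p))) ++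
  (N.flatMap fun s => N.map fun p => equiv (atomO s p) (neg (atomA s p)))

theorem lukAx_of_mem_axiomInstances {N : List ℕ} {γ : LForm} (h : γ ∈ axiomInstances N) :
    LukAx γ := by
  simp only [axiomInstances, List.mem_append, List.mem_map, List.mem_flatMap] at h
  rcases h with ((((⟨_, _, rfl⟩ | ⟨_, _, rfl⟩) | ⟨_, _, _, _, _, _, rfl⟩) |
    ⟨_, _, _, _, _, _, rfl⟩) | ⟨_, _, _, _, rfl⟩) | ⟨_, _, _, _, rfl⟩ <;> simp [LukAx]

theorem goodOn_of_forall_mem_axiomInstances {N : List ℕ} {vA vI vE vO : ℕ → ℕ → Bool}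
    (h : ∀ γ ∈ axiomInstances N, beval vA vI vE vO γ) :
    GoodOn {n | n ∈ N} vA vI ∧ ∀ s ∈ N, ∀ p ∈ N, vE s p = !vI s p ∧ vO s p = !vA s p := by
  simp only [axiomInstances, List.forall_mem_append, List.forall_mem_map,
    List.forall_mem_flatMap, beval, beq_iff_eq, Bool.or_eq_true, Bool.not_eq_true',
    Bool.and_eq_false_iff] at h
  obtain ⟨⟨⟨⟨⟨hA, hI⟩, hbarbara⟩, hdatisi⟩, hE⟩, hO⟩ := h
  refine ⟨⟨hA, hI, fun m hm p hp s hs hmp hsm => ?_, fun m hm p hp s hs hmp hms => ?_⟩,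
    fun s hs p hp => ⟨hE s hs p hp, hO s hs p hp⟩⟩
  · simpa [hmp, hsm] using hbarbara m hm p hp s hs
  · simpa [hmp, hms] using hdatisi m hm p hp s hs

theorem beval_foldr_impl {vA vI vE vO : ℕ → ℕ → Bool} (Γ : List LForm) (φ : LForm) :
    beval vA vI vE vO (Γ.foldr impl φ) ↔
      ((∀ γ ∈ Γ, beval vA vI vE vO γ) → beval vA vI vE vO φ) := by
  induction Γ <;> simp_all [beval, imp_iff_not_or, or_assoc]

theorem Deriv.of_foldr_impl {Ax : LForm → Prop} {Γ : List LForm} {φ : LForm}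
    (hΓ : ∀ γ ∈ Γ, Deriv Ax γ) (h : Deriv Ax (Γ.foldr impl φ)) : Deriv Ax φ := by
  induction Γ with
  | nil => exact h
  | cons γ Γ ih => exact ih (fun γ' hγ' => hΓ γ' (.tail γ hγ')) (h.mp (hΓ γ List.mem_cons_self))

def reflRestrict (N : List ℕ) (v : ℕ → ℕ → Bool) (s p : ℕ) : Bool :=
  s == p || (decide (s ∈ N) && decide (p ∈ N) && v s p)

theorem reflRestrict_iff {N : List ℕ} {v : ℕ → ℕ → Bool} {s p : ℕ} :
    reflRestrict N v s p ↔ s = p ∨ s ∈ N ∧ p ∈ N ∧ v s p := by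
  simp [reflRestrict, and_assoc]

theorem reflRestrict_eq {N : List ℕ} {v : ℕ → ℕ → Bool} (hv : ∀ n ∈ N, v n n) {s p : ℕ}
    (hs : s ∈ N) (hp : p ∈ N) : reflRestrict N v s p = v s p := by
  by_cases hsp : s = p
  · subst hsp
    simp [reflRestrict, hv s hs]
  · simp [reflRestrict, hsp, hs, hp]

theorem GoodOn.reflRestrict {N : List ℕ} {A I : ℕ → ℕ → Bool} (h : GoodOn {n | n ∈ N} A I) :
    GoodOn univ (reflRestrict N A) (reflRestrict N I) := by
  refine ⟨fun n _ => by simp [reflRestrict_iff], fun n _ => by simp [reflRestrict_iff],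
    fun m _ p _ s _ hmp hsm => ?_, fun m _ p _ s _ hmp hms => ?_⟩
  · rw [reflRestrict_iff] at hmp hsm ⊢
    rcases hmp with rfl | ⟨hm, hp, hmp⟩
    · exact hsm
    rcases hsm with rfl | ⟨hs, -, hsm⟩
    · exact .inr ⟨hm, hp, hmp⟩
    · exact .inr ⟨hs, hp, h.barbara m hm p hp s hs hmp hsm⟩
  · rw [reflRestrict_iff] at hmp hms ⊢
    rcases hmp with rfl | ⟨hm, hp, hmp⟩
    · rcases hms with rfl | ⟨hm, hs, hms⟩
      · exact .inl rfl
      · exact .inr ⟨hs, hm, h.datisi m hm m hm s hs (h.refl_a m hm) hms⟩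
    rcases hms with rfl | ⟨-, hs, hms⟩
    · exact .inr ⟨hm, hp, h.datisi m hm p hp m hm hmp (h.refl_i m hm)⟩
    · exact .inr ⟨hs, hp, h.datisi m hm p hp s hs hmp hms⟩

theorem taut_foldr_axiomInstances {φ : LForm}
    (hφ : ∀ A I, GoodOn univ A I → bevalAI A I φ) :
    Taut ((axiomInstances (names φ)).foldr impl φ) := by
  intro vA vI vE vO
  rw [beval_foldr_impl]
  intro hΓ
  obtain ⟨hgood, hEO⟩ := goodOn_of_forall_mem_axiomInstances hΓ
  have hagree : ∀ s ∈ names φ, ∀ p ∈ names φ,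
      vA s p = reflRestrict (names φ) vA s p ∧ vI s p = reflRestrict (names φ) vI s p ∧
      vE s p = !reflRestrict (names φ) vI s p ∧ vO s p = !reflRestrict (names φ) vA s p := by
    intro s hs p hp
    rw [reflRestrict_eq hgood.refl_a hs hp, reflRestrict_eq hgood.refl_i hs hp]
    exact ⟨rfl, rfl, hEO s hs p hp⟩
  rw [beval_congr hagree]
  exact hφ _ _ hgood.reflRestrict

theorem deriv_lukAx_of_forall_eval {φ : LForm}
    (h : ∀ D : ℕ → Set (ℕ × ℕ), (∀ n, (D n).Nonempty) → eval D φ) : Deriv LukAx φ := by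
  have hφ : ∀ A I, GoodOn univ A I → bevalAI A I φ := fun A I hAI =>
    (hAI.eval_canonicalModel φ).1 (h _ hAI.canonicalModel_nonempty)
  exact Deriv.of_foldr_impl (fun γ hγ => .ax (lukAx_of_mem_axiomInstances hγ))
    (.taut (taut_foldr_axiomInstances hφ))

end LForm

open LForm

/-- Soundness and completeness of Łukasiewicz's calculus: a formula is a
thesis if and only if it is a traditional set-theoretic tautology. -/
theorem lukasiewicz_sound_complete (φ : LForm) :
    Deriv LukAx φ ↔
      ∀ (U : Type), Nonempty U → ∀ D : Nat → Set U,
        (∀ n, (D n).Nonempty) → eval D φ :=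
  ⟨fun h _ _ _ hD => h.eval hD, fun h => deriv_lukAx_of_forall_eval (h _ ⟨(0, 0)⟩)⟩
end

section
/- A formula is a thesis of Łukasiewicz's calculus if and only if it is true in all polyreferential models, i.e., models (U, D) where U has at least two elements and D assigns to every name letter a subset of U with at least two elements. -/
namespace LukAux

open LForm

/-! ### Boolean Łukasiewicz valuations -/

structure LukVal (vA vI vE vO : Nat → Nat → Bool) : Prop where
  arefl : ∀ s, vA s s = true
  irefl : ∀ s, vI s s = true
  barbara : ∀ m p s, vA m p = true → vA s m = true → vA s p = true
  datisi : ∀ m p s, vA m p = true → vI m s = true → vI s p = true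
  e_def : ∀ s p, vE s p = !vI s p
  o_def : ∀ s p, vO s p = !vA s p

lemma LukVal.isymm {vA vI vE vO} (h : LukVal vA vI vE vO) {s p}
    (hsp : vI s p = true) : vI p s = true :=
  h.datisi s s p (h.arefl s) hsp

/-! ### maxLet and agreement -/

def maxLet : LForm → Nat
  | .atomA s p => max s p + 1
  | .atomI s p => max s p + 1
  | .atomE s p => max s p + 1
  | .atomO s p => max s p + 1
  | .neg φ => maxLet φ
  | .conj φ ψ => max (maxLet φ) (maxLet ψ)
  | .disj φ ψ => max (maxLet φ) (maxLet ψ)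
  | .impl φ ψ => max (maxLet φ) (maxLet ψ)
  | .equiv φ ψ => max (maxLet φ) (maxLet ψ)

lemma one_le_maxLet (φ : LForm) : 1 ≤ maxLet φ := by
  induction φ <;> simp [maxLet] <;> omega

lemma beval_agree (k : Nat) (vA vI vE vO vA' vI' vE' vO' : Nat → Nat → Bool)
    (hA : ∀ s p, s < k → p < k → vA s p = vA' s p)
    (hI : ∀ s p, s < k → p < k → vI s p = vI' s p)
    (hE : ∀ s p, s < k → p < k → vE s p = vE' s p)
    (hO : ∀ s p, s < k → p < k → vO s p = vO' s p) :
    ∀ φ, maxLet φ ≤ k → beval vA vI vE vO φ = beval vA' vI' vE' vO' φ := by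
  intro φ
  induction φ with
  | atomA s p => intro h; simp [maxLet] at h; exact hA s p (by omega) (by omega)
  | atomI s p => intro h; simp [maxLet] at h; exact hI s p (by omega) (by omega)
  | atomE s p => intro h; simp [maxLet] at h; exact hE s p (by omega) (by omega)
  | atomO s p => intro h; simp [maxLet] at h; exact hO s p (by omega) (by omega)
  | neg φ ih => intro h; simp [maxLet] at h; simp [beval, ih h]
  | conj φ ψ ih1 ih2 =>
      intro h; simp [maxLet] at h; simp [beval, ih1 h.1, ih2 h.2]
  | disj φ ψ ih1 ih2 =>
      intro h; simp [maxLet] at h; simp [beval, ih1 h.1, ih2 h.2]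
  | impl φ ψ ih1 ih2 =>
      intro h; simp [maxLet] at h; simp [beval, ih1 h.1, ih2 h.2]
  | equiv φ ψ ih1 ih2 =>
      intro h; simp [maxLet] at h; simp [beval, ih1 h.1, ih2 h.2]

/-! ### eval vs beval -/

lemma eval_iff_beval {α : Type} (D : Nat → Set α) (vA vI vE vO : Nat → Nat → Bool)
    (hA : ∀ s p, vA s p = true ↔ D s ⊆ D p)
    (hI : ∀ s p, vI s p = true ↔ (D s ∩ D p).Nonempty)
    (hE : ∀ s p, vE s p = true ↔ ¬ (D s ∩ D p).Nonempty)
    (hO : ∀ s p, vO s p = true ↔ ¬ D s ⊆ D p) :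
    ∀ φ, eval D φ ↔ beval vA vI vE vO φ = true := by
  intro φ
  induction φ with
  | atomA s p => simpa [eval, beval] using (hA s p).symm
  | atomI s p => simpa [eval, beval] using (hI s p).symm
  | atomE s p => simpa [eval, beval] using (hE s p).symm
  | atomO s p => simpa [eval, beval] using (hO s p).symm
  | neg φ ih => simp [eval, beval, ih]
  | conj φ ψ ih1 ih2 => simp [eval, beval, ih1, ih2]
  | disj φ ψ ih1 ih2 => simp [eval, beval, ih1, ih2]
  | impl φ ψ ih1 ih2 =>
      simp only [eval, beval, ih1, ih2, Bool.not_or_self, Bool.or_eq_true, Bool.not_eq_true']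
      cases h1 : beval vA vI vE vO φ <;> cases h2 : beval vA vI vE vO ψ <;> simp_all
  | equiv φ ψ ih1 ih2 =>
      simp only [eval, beval, ih1, ih2, beq_iff_eq]
      constructor
      · intro h
        cases h1 : beval vA vI vE vO φ <;> cases h2 : beval vA vI vE vO ψ <;>
          simp_all
      · intro h; rw [h]

lemma eval_rename {α : Type} (D : Nat → Set α) (σ : Nat → Nat) :
    ∀ φ, eval D (rename σ φ) ↔ eval (fun n => D (σ n)) φ := by
  intro φ
  induction φ <;> simp [rename, eval, *]

/-! ### Soundness -/

lemma soundness {φ : LForm} (h : Deriv LukAx φ) :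
    ∀ (U : Type), Nontrivial U → ∀ D : Nat → Set U,
      (∀ n, (D n).Nontrivial) → eval D φ := by
  induction h with
  | ax hφ =>
      intro U _ D hD
      rcases hφ with ⟨S, rfl⟩ | ⟨S, rfl⟩ | ⟨M, P, S, rfl⟩ | ⟨M, P, S, rfl⟩ |
        ⟨S, P, rfl⟩ | ⟨S, P, rfl⟩
      · exact fun x hx => hx
      · simpa [eval, Set.inter_self] using (hD S).nonempty
      · rintro ⟨h1, h2⟩ x hx; exact h1 (h2 hx)
      · rintro ⟨h1, ⟨x, hx1, hx2⟩⟩; exact ⟨x, hx2, h1 hx1⟩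
      · exact Iff.rfl
      · exact Iff.rfl
  | taut hφ =>
      intro U _ D hD
      classical
      rw [eval_iff_beval D (fun s p => decide (D s ⊆ D p))
        (fun s p => decide ((D s ∩ D p).Nonempty))
        (fun s p => decide (¬ (D s ∩ D p).Nonempty))
        (fun s p => decide (¬ D s ⊆ D p))
        (by simp) (by simp) (by simp) (by simp)]
      exact hφ _ _ _ _
  | mp h1 h2 ih1 ih2 =>
      intro U hU D hD
      exact ih1 U hU D hD (ih2 U hU D hD)
  | subst σ h ih =>
      intro U hU D hD
      rw [eval_rename]
      exact ih U hU (fun n => D (σ n)) (fun n => hD (σ n))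

end LukAux
namespace LukAux

open LForm

/-! ### The canonical polyreferential model of a Łukasiewicz valuation -/

def modelD (vA vI : Nat → Nat → Bool) (n : Nat) : Set ((Nat × Nat) × Bool) :=
  {x | vI x.1.1 x.1.2 = true ∧ (vA x.1.1 n = true ∨ vA x.1.2 n = true)}

section Model
variable {vA vI vE vO : Nat → Nat → Bool}

lemma modelD_nontrivial (h : LukVal vA vI vE vO) (n : Nat) : (modelD vA vI n).Nontrivial := by
  refine ⟨((n, n), true), ?_, ((n, n), false), ?_, by simp⟩
  · exact ⟨h.irefl n, Or.inl (h.arefl n)⟩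
  · exact ⟨h.irefl n, Or.inl (h.arefl n)⟩

lemma modelD_subset_iff (h : LukVal vA vI vE vO) (s p : Nat) :
    modelD vA vI s ⊆ modelD vA vI p ↔ vA s p = true := by
  constructor
  · intro hsub
    have hm : ((s, s), true) ∈ modelD vA vI s := ⟨h.irefl s, Or.inl (h.arefl s)⟩
    rcases hsub hm with ⟨_, h2 | h2⟩ <;> exact h2
  · rintro hsp ⟨⟨x, y⟩, b⟩ ⟨hxy, hx | hy⟩
    · exact ⟨hxy, Or.inl (h.barbara s p x hsp hx)⟩
    · exact ⟨hxy, Or.inr (h.barbara s p y hsp hy)⟩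

lemma modelD_inter_iff (h : LukVal vA vI vE vO) (s p : Nat) :
    (modelD vA vI s ∩ modelD vA vI p).Nonempty ↔ vI s p = true := by
  constructor
  · rintro ⟨⟨⟨x, y⟩, b⟩, ⟨hxy, hs⟩, ⟨_, hp⟩⟩
    rcases hs with hs | hs <;> rcases hp with hp | hp
    · exact h.datisi x p s hp (h.datisi x s x hs (h.irefl x))
    · exact h.datisi y p s hp (h.datisi x s y hs hxy)
    · exact h.datisi x p s hp (h.datisi y s x hs (h.isymm hxy))
    · exact h.datisi y p s hp (h.datisi y s y hs (h.irefl y))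
  · intro hsp
    exact ⟨((s, p), true), ⟨hsp, Or.inl (h.arefl s)⟩, ⟨hsp, Or.inr (h.arefl p)⟩⟩

lemma lukval_beval (h : LukVal vA vI vE vO) (φ : LForm)
    (H : ∀ (U : Type), Nontrivial U → ∀ D : Nat → Set U,
        (∀ n, (D n).Nontrivial) → eval D φ) :
    beval vA vI vE vO φ = true := by
  have he := H ((Nat × Nat) × Bool) inferInstance (modelD vA vI)
    (modelD_nontrivial h)
  rw [eval_iff_beval (modelD vA vI) vA vI vE vO
    (fun s p => (modelD_subset_iff h s p).symm)
    (fun s p => (modelD_inter_iff h s p).symm)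
    (fun s p => by rw [h.e_def]; simp [modelD_inter_iff h s p, Bool.not_eq_true'])
    (fun s p => by rw [h.o_def]; simp [modelD_subset_iff h s p, Bool.not_eq_true'])] at he
  exact he

end Model

/-! ### Conjunction of a list of formulas -/

def conjList : List LForm → LForm
  | [] => LForm.impl (atomA 0 0) (atomA 0 0)
  | ψ :: l => conj ψ (conjList l)

lemma deriv_conjList {Ax : LForm → Prop} (L : List LForm)
    (h : ∀ ψ ∈ L, Deriv Ax ψ) : Deriv Ax (conjList L) := by
  induction L with
  | nil =>
      apply Deriv.taut
      intro vA vI vE vO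
      simp [conjList, beval]
  | cons ψ l ih =>
      have h1 : Deriv Ax ψ := h ψ (by simp)
      have h2 : Deriv Ax (conjList l) := ih (fun χ hχ => h χ (by simp [hχ]))
      have ht : Taut (LForm.impl ψ (LForm.impl (conjList l) (conj ψ (conjList l)))) := by
        intro vA vI vE vO
        simp only [beval]
        cases beval vA vI vE vO ψ <;> cases beval vA vI vE vO (conjList l) <;> simp
      exact Deriv.mp (Deriv.mp (Deriv.taut ht) h1) h2

lemma beval_conjList {vA vI vE vO : Nat → Nat → Bool} {L : List LForm}
    (h : beval vA vI vE vO (conjList L) = true) :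
    ∀ ψ ∈ L, beval vA vI vE vO ψ = true := by
  induction L with
  | nil => simp
  | cons ψ l ih =>
      simp only [conjList, beval, Bool.and_eq_true] at h
      intro χ hχ
      rcases List.mem_cons.1 hχ with rfl | hχ
      · exact h.1
      · exact ih h.2 χ hχ

/-! ### The finite list of axiom instances with letters below k -/

def axList (k : Nat) : List LForm :=
  ((List.range k).map fun s => atomA s s) ++
  ((List.range k).map fun s => atomI s s) ++
  ((List.range k).flatMap fun s => (List.range k).map fun p =>
      equiv (atomE s p) (neg (atomI s p))) ++
  ((List.range k).flatMap fun s => (List.range k).map fun p =>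
      equiv (atomO s p) (neg (atomA s p))) ++
  ((List.range k).flatMap fun m => (List.range k).flatMap fun p =>
      (List.range k).map fun s =>
        LForm.impl (conj (atomA m p) (atomA s m)) (atomA s p)) ++
  ((List.range k).flatMap fun m => (List.range k).flatMap fun p =>
      (List.range k).map fun s =>
        LForm.impl (conj (atomA m p) (atomI m s)) (atomI s p))

lemma deriv_axList (k : Nat) : ∀ ψ ∈ axList k, Deriv LukAx ψ := by
  intro ψ hψ
  simp only [axList, List.mem_append, List.mem_map, List.mem_flatMap,
    List.mem_range] at hψ
  apply Deriv.ax
  rcases hψ with ((((⟨s, _, rfl⟩ | ⟨s, _, rfl⟩) | ⟨s, _, _, _, rfl⟩) |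
      ⟨s, _, _, _, rfl⟩) | ⟨m, _, _, _, s, _, rfl⟩) | ⟨m, _, _, _, s, _, rfl⟩
  · exact Or.inl ⟨s, rfl⟩
  · exact Or.inr (Or.inl ⟨s, rfl⟩)
  · exact Or.inr (Or.inr (Or.inr (Or.inr (Or.inl ⟨_, _, rfl⟩))))
  · exact Or.inr (Or.inr (Or.inr (Or.inr (Or.inr ⟨_, _, rfl⟩))))
  · exact Or.inr (Or.inr (Or.inl ⟨_, _, _, rfl⟩))
  · exact Or.inr (Or.inr (Or.inr (Or.inl ⟨_, _, _, rfl⟩)))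

section Membership
variable {k : Nat}

lemma mem_axA {s : Nat} (hs : s < k) : atomA s s ∈ axList k := by
  simp only [axList, List.mem_append, List.mem_flatMap, List.mem_map, List.mem_range]
  exact Or.inl (Or.inl (Or.inl (Or.inl (Or.inl ⟨s, hs, rfl⟩))))

lemma mem_axI {s : Nat} (hs : s < k) : atomI s s ∈ axList k := by
  simp only [axList, List.mem_append, List.mem_flatMap, List.mem_map, List.mem_range]
  exact Or.inl (Or.inl (Or.inl (Or.inl (Or.inr ⟨s, hs, rfl⟩))))

lemma mem_axE {s p : Nat} (hs : s < k) (hp : p < k) :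
    equiv (atomE s p) (neg (atomI s p)) ∈ axList k := by
  simp only [axList, List.mem_append, List.mem_flatMap, List.mem_map, List.mem_range]
  exact Or.inl (Or.inl (Or.inl (Or.inr ⟨s, hs, p, hp, rfl⟩)))

lemma mem_axO {s p : Nat} (hs : s < k) (hp : p < k) :
    equiv (atomO s p) (neg (atomA s p)) ∈ axList k := by
  simp only [axList, List.mem_append, List.mem_flatMap, List.mem_map, List.mem_range]
  exact Or.inl (Or.inl (Or.inr ⟨s, hs, p, hp, rfl⟩))

lemma mem_axBarbara {m p s : Nat} (hm : m < k) (hp : p < k) (hs : s < k) :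
    LForm.impl (conj (atomA m p) (atomA s m)) (atomA s p) ∈ axList k := by
  simp only [axList, List.mem_append, List.mem_flatMap, List.mem_map, List.mem_range]
  exact Or.inl (Or.inr ⟨m, hm, p, hp, s, hs, rfl⟩)

lemma mem_axDatisi {m p s : Nat} (hm : m < k) (hp : p < k) (hs : s < k) :
    LForm.impl (conj (atomA m p) (atomI m s)) (atomI s p) ∈ axList k := by
  simp only [axList, List.mem_append, List.mem_flatMap, List.mem_map, List.mem_range]
  exact Or.inr ⟨m, hm, p, hp, s, hs, rfl⟩

end Membership

/-! ### Completeness -/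

lemma completeness (φ : LForm)
    (H : ∀ (U : Type), Nontrivial U → ∀ D : Nat → Set U,
        (∀ n, (D n).Nontrivial) → eval D φ) :
    Deriv LukAx φ := by
  set k := maxLet φ with hk
  have hk1 : 1 ≤ k := one_le_maxLet φ
  have hT : Taut (LForm.impl (conjList (axList k)) φ) := by
    intro vA vI vE vO
    simp only [beval, Bool.or_eq_true, Bool.not_eq_true']
    by_cases hΓ : beval vA vI vE vO (conjList (axList k)) = true
    · right
      have hall := beval_conjList hΓ
      set σ : Nat → Nat := fun n => if n < k then n else 0 with hσ
      have hσk : ∀ n, σ n < k := by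
        intro n; simp only [hσ]; split <;> omega
      set vA' : Nat → Nat → Bool := fun s p => vA (σ s) (σ p) with hvA
      set vI' : Nat → Nat → Bool := fun s p => vI (σ s) (σ p) with hvI
      set vE' : Nat → Nat → Bool := fun s p => vE (σ s) (σ p) with hvE
      set vO' : Nat → Nat → Bool := fun s p => vO (σ s) (σ p) with hvO
      have hLV : LukVal vA' vI' vE' vO' := by
        constructor
        · intro s
          exact hall _ (mem_axA (hσk s))
        · intro s
          exact hall _ (mem_axI (hσk s))
        · intro m p s h1 h2
          have := hall _ (mem_axBarbara (hσk m) (hσk p) (hσk s))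
          simp only [beval, hvA] at *
          simp_all
        · intro m p s h1 h2
          have := hall _ (mem_axDatisi (hσk m) (hσk p) (hσk s))
          simp only [beval, hvA, hvI] at *
          simp_all
        · intro s p
          have := hall _ (mem_axE (hσk s) (hσk p))
          simp only [beval, beq_iff_eq, hvE, hvI] at *
          simp_all
        · intro s p
          have := hall _ (mem_axO (hσk s) (hσk p))
          simp only [beval, beq_iff_eq, hvO, hvA] at *
          simp_all
      have hφ' : beval vA' vI' vE' vO' φ = true := lukval_beval hLV φ H
      have hagree : beval vA vI vE vO φ = beval vA' vI' vE' vO' φ := by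
        have hid : ∀ n, n < k → σ n = n := by
          intro n hn; simp only [hσ]; rw [if_pos hn]
        refine beval_agree k vA vI vE vO vA' vI' vE' vO' ?_ ?_ ?_ ?_ φ (le_of_eq hk)
        all_goals intro s p hs hp
        · simp [hvA, hid s hs, hid p hp]
        · simp [hvI, hid s hs, hid p hp]
        · simp [hvE, hid s hs, hid p hp]
        · simp [hvO, hid s hs, hid p hp]
      rw [hagree]; exact hφ'
    · left
      exact Bool.not_eq_true _ ▸ (Bool.eq_false_iff.mpr hΓ)
  exact Deriv.mp (Deriv.taut hT) (deriv_conjList _ (deriv_axList k))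

end LukAux
open LForm

/-- A formula is a thesis of Łukasiewicz's calculus if and only if it is true
in all polyreferential models: models `(U, D)` where `U` has at least two
elements and every `D n` has at least two elements. -/
theorem lukasiewicz_polyreferential_complete (φ : LForm) :
    Deriv LukAx φ ↔
      ∀ (U : Type), Nontrivial U → ∀ D : Nat → Set U,
        (∀ n, (D n).Nontrivial) → eval D φ := by
  constructor
  · exact LukAux.soundness
  · exact LukAux.completeness φ
end

section
/- The formula (ex S ∧ ¬ ex P) → S o P is derivable in the definitional extension of Shepherdson's system with ex S ↔ S i S, S e P ↔ ¬(S i P), and S o P ↔ ¬(S a P). -/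
inductive XForm : Type
  | atomA : Nat → Nat → XForm
  | atomI : Nat → Nat → XForm
  | atomE : Nat → Nat → XForm
  | atomO : Nat → Nat → XForm
  | exA : Nat → XForm
  | neg : XForm → XForm
  | conj : XForm → XForm → XForm
  | disj : XForm → XForm → XForm
  | impl : XForm → XForm → XForm
  | equiv : XForm → XForm → XForm

namespace XForm

def beval (vA vI vE vO : Nat → Nat → Bool) (vX : Nat → Bool) : XForm → Bool
  | atomA s p => vA s p
  | atomI s p => vI s p
  | atomE s p => vE s p
  | atomO s p => vO s p
  | exA s => vX s
  | neg φ => !(beval vA vI vE vO vX φ)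
  | conj φ ψ => beval vA vI vE vO vX φ && beval vA vI vE vO vX ψ
  | disj φ ψ => beval vA vI vE vO vX φ || beval vA vI vE vO vX ψ
  | impl φ ψ => !(beval vA vI vE vO vX φ) || beval vA vI vE vO vX ψ
  | equiv φ ψ => beval vA vI vE vO vX φ == beval vA vI vE vO vX ψ

def Taut (φ : XForm) : Prop := ∀ vA vI vE vO vX, beval vA vI vE vO vX φ = true

def rename (σ : Nat → Nat) : XForm → XForm
  | atomA s p => atomA (σ s) (σ p)
  | atomI s p => atomI (σ s) (σ p)
  | atomE s p => atomE (σ s) (σ p)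
  | atomO s p => atomO (σ s) (σ p)
  | exA s => exA (σ s)
  | neg φ => neg (rename σ φ)
  | conj φ ψ => conj (rename σ φ) (rename σ ψ)
  | disj φ ψ => disj (rename σ φ) (rename σ ψ)
  | impl φ ψ => impl (rename σ φ) (rename σ ψ)
  | equiv φ ψ => equiv (rename σ φ) (rename σ ψ)

inductive Deriv (Ax : XForm → Prop) : XForm → Prop
  | ax {φ} : Ax φ → Deriv Ax φ
  | taut {φ} : Taut φ → Deriv Ax φ
  | mp {φ ψ} : Deriv Ax (impl φ ψ) → Deriv Ax φ → Deriv Ax ψ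
  | subst {φ} (σ : Nat → Nat) : Deriv Ax φ → Deriv Ax (rename σ φ)

/-- The axioms of Shepherdson's system Sh together with the definitions of
`e`, `o` and of the existence functor `ex S ↔ S i S`. -/
def ShExAx : XForm → Prop := fun φ =>
  (∃ S, φ = atomA S S) ∨
  (∃ M P S, φ = impl (conj (atomA M P) (atomA S M)) (atomA S P)) ∨
  (∃ M P S, φ = impl (conj (atomA M P) (atomI M S)) (atomI S P)) ∨
  (∃ S P, φ = impl (atomI S P) (atomI S S)) ∨
  (∃ S P, φ = impl (neg (atomI S S)) (atomA S P)) ∨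
  (∃ S P, φ = equiv (atomE S P) (neg (atomI S P))) ∨
  (∃ S P, φ = equiv (atomO S P) (neg (atomA S P))) ∨
  (∃ S, φ = equiv (exA S) (atomI S S))

end XForm

open XForm

/-- In the definitional extension of Shepherdson's system with
`ex S ↔ S i S`, `S e P ↔ ¬(S i P)` and `S o P ↔ ¬(S a P)`, the formula
`(ex S ∧ ¬ ex P) → S o P` is derivable. -/
theorem ex_nonex_o_derivable (S P : Nat) :
    Deriv ShExAx (impl (conj (exA S) (neg (exA P))) (atomO S P)) := by
  have d1 : Deriv ShExAx (impl (conj (atomA S P) (atomI S S)) (atomI S P)) :=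
    Deriv.ax (Or.inr (Or.inr (Or.inl ⟨S, P, S, rfl⟩)))
  have d2 : Deriv ShExAx (impl (conj (atomA S P) (atomI S P)) (atomI P P)) :=
    Deriv.ax (Or.inr (Or.inr (Or.inl ⟨S, P, P, rfl⟩)))
  have e1 : Deriv ShExAx (equiv (exA S) (atomI S S)) :=
    Deriv.ax (Or.inr (Or.inr (Or.inr (Or.inr (Or.inr (Or.inr (Or.inr ⟨S, rfl⟩)))))))
  have e2 : Deriv ShExAx (equiv (exA P) (atomI P P)) :=
    Deriv.ax (Or.inr (Or.inr (Or.inr (Or.inr (Or.inr (Or.inr (Or.inr ⟨P, rfl⟩)))))))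
  have e3 : Deriv ShExAx (equiv (atomO S P) (neg (atomA S P))) :=
    Deriv.ax (Or.inr (Or.inr (Or.inr (Or.inr (Or.inr (Or.inr (Or.inl ⟨S, P, rfl⟩)))))))
  have t : Deriv ShExAx
      (impl (impl (conj (atomA S P) (atomI S S)) (atomI S P))
        (impl (impl (conj (atomA S P) (atomI S P)) (atomI P P))
          (impl (equiv (exA S) (atomI S S))
            (impl (equiv (exA P) (atomI P P))
              (impl (equiv (atomO S P) (neg (atomA S P)))
                (impl (conj (exA S) (neg (exA P))) (atomO S P))))))) := by
    apply Deriv.taut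
    intro vA vI vE vO vX
    simp only [beval]
    cases vA S P <;> cases vI S S <;> cases vI S P <;> cases vI P P <;>
      cases vX S <;> cases vX P <;> cases vO S P <;> rfl
  exact ((((t.mp d1).mp d2).mp e1).mp e2).mp e3
end

section
/- Every B1-algebra is epimorphic to a special B1-algebra: given (S, A, I) satisfying Aaa; (Aab ∧ Abc) → Aac; (Aab ∧ Iac) → Icb; Iab → Iaa; Iaa ∨ Aab for all elements, there is a set V and a map e : S → P(V) such that Aab iff e(a) ⊆ e(b), and Iab iff e(a) ∩ e(b) ≠ ∅. -/
/-- Every B1-algebra is epimorphic to a special B1-algebra: given `(S, A, I)`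
satisfying (B1)-(B5), there are a set `V` and a map `e : S → Set V` such that
`A a b ↔ e a ⊆ e b` and `I a b ↔ e a ∩ e b ≠ ∅`. -/
theorem b1_algebra_epimorphic_to_special
    (S : Type) (hS : Nonempty S) (A I : S → S → Prop)
    (hB1 : ∀ a, A a a)
    (hB2 : ∀ a b c, A a b → A b c → A a c)
    (hB3 : ∀ a b c, A a b → I a c → I c b)
    (hB4 : ∀ a b, I a b → I a a)
    (hB5 : ∀ a b, I a a ∨ A a b) :
    ∃ (V : Type) (e : S → Set V),
      ∀ a b, (A a b ↔ e a ⊆ e b) ∧ (I a b ↔ (e a ∩ e b).Nonempty) := by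
  -- symmetry of I
  have hsym : ∀ a b, I a b → I b a := fun a b h => hB3 a a b (hB1 a) h
  -- key lemma: x below both a and b, with I x x, gives I a b
  have hkey : ∀ x a b, I x x → A x a → A x b → I a b := by
    intro x a b hxx hxa hxb
    have h1 : I x a := hB3 x a x hxa hxx
    exact hB3 x b a hxb h1
  refine ⟨S ⊕ (S × S),
    fun a => {v | match v with
      | Sum.inl x => I x x ∧ A x a
      | Sum.inr (x, y) => I x y ∧ (A x a ∨ A y a)}, ?_⟩
  intro a b
  constructor
  · constructor
    · intro hab v hv
      rcases v with x | ⟨x, y⟩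
      · exact ⟨hv.1, hB2 x a b hv.2 hab⟩
      · exact ⟨hv.1, hv.2.imp (fun h => hB2 x a b h hab) (fun h => hB2 y a b h hab)⟩
    · intro hsub
      rcases hB5 a b with haa | hab
      · exact (hsub (show Sum.inl a ∈ _ from ⟨haa, hB1 a⟩)).2
      · exact hab
  · constructor
    · intro hab
      exact ⟨Sum.inr (a, b), ⟨hab, Or.inl (hB1 a)⟩, ⟨hab, Or.inr (hB1 b)⟩⟩
    · rintro ⟨v, hva, hvb⟩
      rcases v with x | ⟨x, y⟩
      · exact hkey x a b hva.1 hva.2 hvb.2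
      · obtain ⟨hxy, hxa | hya⟩ := hva <;> obtain ⟨-, hxb | hyb⟩ := hvb
        · exact hkey x a b (hB4 x y hxy) hxa hxb
        · -- A x a, A y b, I x y
          have h1 : I y a := hB3 x a y hxa hxy
          exact hB3 y b a hyb h1
        · have h1 : I x a := hB3 y a x hya (hsym x y hxy)
          exact hB3 x b a hxb h1
        · exact hkey y a b (hB4 y x (hsym x y hxy)) hya hyb
end

section
/- In a B1-algebra, for all a, b: if Iab holds, then the set [a,b] := {c : Aac ∨ Abc} is an I-set containing both a and b, where an I-set is a nonempty F ⊆ S closed upward under A (if x ∈ F and Axy then y ∈ F) and such that any two of its members stand in relation I. -/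
/-- An I-set in a structure `(S, A, I)`: a nonempty subset closed upward
under `A`, any two of whose members stand in the relation `I`. -/
def IsISet {S : Type} (A I : S → S → Prop) (F : Set S) : Prop :=
  F.Nonempty ∧ (∀ a b, a ∈ F → A a b → b ∈ F) ∧ (∀ a b, a ∈ F → b ∈ F → I a b)

/-- In a B1-algebra, if `I a b` holds then `[a,b] = {c | A a c ∨ A b c}` is an
I-set containing both `a` and `b`. -/
theorem pair_iset
    (S : Type) (hS : Nonempty S) (A I : S → S → Prop)
    (hB1 : ∀ a, A a a)
    (hB2 : ∀ a b c, A a b → A b c → A a c)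
    (hB3 : ∀ a b c, A a b → I a c → I c b)
    (hB4 : ∀ a b, I a b → I a a)
    (hB5 : ∀ a b, I a a ∨ A a b) :
    ∀ a b, I a b →
      IsISet A I {c | A a c ∨ A b c} ∧
      a ∈ {c | A a c ∨ A b c} ∧ b ∈ {c | A a c ∨ A b c} := by
  intro a b hab
  have haa : I a a := hB4 a b hab
  have hba : I b a := hB3 a a b (hB1 a) hab
  have hbb : I b b := hB4 b a hba
  have hax : ∀ x, A a x → I a x := fun x h => hB3 a x a h haa
  have hbx : ∀ x, A b x → I b x := fun x h => hB3 b x b h hbb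
  have hAabx : ∀ x, A a x → I b x := fun x h => hB3 a x b h hab
  have hBabx : ∀ x, A b x → I a x := fun x h => hB3 b x a h hba
  refine ⟨⟨⟨a, Or.inl (hB1 a)⟩, ?_, ?_⟩, Or.inl (hB1 a), Or.inr (hB1 b)⟩
  · rintro x y (hx | hx) h
    · exact Or.inl (hB2 a x y hx h)
    · exact Or.inr (hB2 b x y hx h)
  · rintro x y (hx | hx) (hy | hy)
    · exact hB3 a y x hy (hax x hx)
    · exact hB3 b y x hy (hAabx x hx)
    · exact hB3 a y x hy (hBabx x hx)
    · exact hB3 b y x hy (hbx x hx)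
end

section
/- In a B1-algebra, Iaa holds if and only if there exists an I-set containing a; equivalently, Iaa holds iff [a,a] = {c : Aac} is an I-set containing a. -/
/-- In a B1-algebra, `I a a` holds iff there exists an I-set containing `a`;
equivalently, iff `[a,a] = {c | A a c}` is an I-set containing `a`. -/
theorem iaa_iff_iset
    (S : Type) (hS : Nonempty S) (A I : S → S → Prop)
    (hB1 : ∀ a, A a a)
    (hB2 : ∀ a b c, A a b → A b c → A a c)
    (hB3 : ∀ a b c, A a b → I a c → I c b)
    (hB4 : ∀ a b, I a b → I a a)
    (hB5 : ∀ a b, I a a ∨ A a b) :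
    ∀ a, (I a a ↔ ∃ F : Set S, IsISet A I F ∧ a ∈ F) ∧
      (I a a ↔ (IsISet A I {c | A a c} ∧ a ∈ {c | A a c})) := by
  intro a
  have key : I a a → IsISet A I {c | A a c} ∧ a ∈ {c | A a c} := by
    intro hIaa
    refine ⟨⟨⟨a, hB1 a⟩, ?_, ?_⟩, hB1 a⟩
    · intro x y hx hxy; exact hB2 a x y hx hxy
    · intro x y hx hy
      have hIax : I a x := hB3 a x a hx hIaa
      exact hB3 a y x hy hIax
  constructor
  · constructor
    · intro h; exact ⟨{c | A a c}, key h⟩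
    · rintro ⟨F, ⟨_, _, hI⟩, haF⟩; exact hI a a haF haF
  · constructor
    · exact key
    · rintro ⟨⟨_, _, hI⟩, haF⟩; exact hI a a haF haF
end

section
/- Given a maximal consistent set Γ of formulas in the system Sh+ε (Shepherdson's axioms plus Ish1, S ε P → S a P, S ε S → S i S, and (S a M ∧ M ε M ∧ S i P) → S ε P), the relation S ∼ P defined by (S a P ∧ P a S) ∈ Γ is an equivalence relation on name letters which is a congruence with respect to the functors a, i, and ε (i.e., replacing a name letter by an equivalent one in an atomic formula preserves membership in Γ). -/
inductive EForm : Type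
  | atomA : Nat → Nat → EForm
  | atomI : Nat → Nat → EForm
  | atomE : Nat → Nat → EForm
  | atomO : Nat → Nat → EForm
  | atomEps : Nat → Nat → EForm
  | neg : EForm → EForm
  | conj : EForm → EForm → EForm
  | disj : EForm → EForm → EForm
  | impl : EForm → EForm → EForm
  | equiv : EForm → EForm → EForm
  deriving DecidableEq

namespace EForm

def beval (vA vI vE vO vEp : Nat → Nat → Bool) : EForm → Bool
  | atomA s p => vA s p
  | atomI s p => vI s p
  | atomE s p => vE s p
  | atomO s p => vO s p
  | atomEps s p => vEp s p
  | neg φ => !(beval vA vI vE vO vEp φ)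
  | conj φ ψ => beval vA vI vE vO vEp φ && beval vA vI vE vO vEp ψ
  | disj φ ψ => beval vA vI vE vO vEp φ || beval vA vI vE vO vEp ψ
  | impl φ ψ => !(beval vA vI vE vO vEp φ) || beval vA vI vE vO vEp ψ
  | equiv φ ψ => beval vA vI vE vO vEp φ == beval vA vI vE vO vEp ψ

def Taut (φ : EForm) : Prop := ∀ vA vI vE vO vEp, beval vA vI vE vO vEp φ = true

def rename (σ : Nat → Nat) : EForm → EForm
  | atomA s p => atomA (σ s) (σ p)
  | atomI s p => atomI (σ s) (σ p)
  | atomE s p => atomE (σ s) (σ p)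
  | atomO s p => atomO (σ s) (σ p)
  | atomEps s p => atomEps (σ s) (σ p)
  | neg φ => neg (rename σ φ)
  | conj φ ψ => conj (rename σ φ) (rename σ ψ)
  | disj φ ψ => disj (rename σ φ) (rename σ ψ)
  | impl φ ψ => impl (rename σ φ) (rename σ ψ)
  | equiv φ ψ => equiv (rename σ φ) (rename σ ψ)

/-- Set-theoretic interpretation; `S ε P` is true iff `D S` is a singleton
whose only element is in `D P`. -/
def eval {α : Type} (D : Nat → Set α) : EForm → Prop
  | atomA s p => D s ⊆ D p
  | atomI s p => (D s ∩ D p).Nonempty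
  | atomE s p => ¬ (D s ∩ D p).Nonempty
  | atomO s p => ¬ D s ⊆ D p
  | atomEps s p => ∃ x, D s = {x} ∧ x ∈ D p
  | neg φ => ¬ eval D φ
  | conj φ ψ => eval D φ ∧ eval D ψ
  | disj φ ψ => eval D φ ∨ eval D ψ
  | impl φ ψ => eval D φ → eval D ψ
  | equiv φ ψ => eval D φ ↔ eval D ψ

/-- The specific axioms of Sh+ε: Shepherdson's axioms, the definitions of `e`
and `o`, and the ε-axioms. -/
def ShEpsAx : EForm → Prop := fun φ =>
  (∃ S, φ = atomA S S) ∨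
  (∃ M P S, φ = impl (conj (atomA M P) (atomA S M)) (atomA S P)) ∨
  (∃ M P S, φ = impl (conj (atomA M P) (atomI M S)) (atomI S P)) ∨
  (∃ S P, φ = impl (atomI S P) (atomI S S)) ∨
  (∃ S P, φ = impl (neg (atomI S S)) (atomA S P)) ∨
  (∃ S P, φ = equiv (atomE S P) (neg (atomI S P))) ∨
  (∃ S P, φ = equiv (atomO S P) (neg (atomA S P))) ∨
  (∃ S P, φ = impl (atomEps S P) (atomEps S S)) ∨
  (∃ S P, φ = impl (atomEps S P) (atomA S P)) ∨
  (∃ S, φ = impl (atomEps S S) (atomI S S)) ∨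
  (∃ S M P, φ = impl (conj (atomA S M) (conj (atomEps M M) (atomI S P))) (atomEps S P))

inductive Deriv (Ax : EForm → Prop) : EForm → Prop
  | ax {φ} : Ax φ → Deriv Ax φ
  | taut {φ} : Taut φ → Deriv Ax φ
  | mp {φ ψ} : Deriv Ax (impl φ ψ) → Deriv Ax φ → Deriv Ax ψ
  | subst {φ} (σ : Nat → Nat) : Deriv Ax φ → Deriv Ax (rename σ φ)

/-- Derivability from a set of premises (premises are used without
substitution, as usual). -/
inductive ProvesFrom (Γ : Set EForm) : EForm → Prop
  | thm {φ} : Deriv ShEpsAx φ → ProvesFrom Γ φ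
  | prem {φ} : φ ∈ Γ → ProvesFrom Γ φ
  | mp {φ ψ} : ProvesFrom Γ (impl φ ψ) → ProvesFrom Γ φ → ProvesFrom Γ ψ

def Consistent (Γ : Set EForm) : Prop :=
  ¬ ∃ φ, ProvesFrom Γ φ ∧ ProvesFrom Γ (neg φ)

def MaxConsistent (Γ : Set EForm) : Prop :=
  Consistent Γ ∧ ∀ φ, φ ∈ Γ ∨ neg φ ∈ Γ

end EForm

open EForm

section Aux

variable {Γ : Set EForm} {φ ψ : EForm}

lemma taut_pair (φ ψ : EForm) : Taut (impl φ (impl ψ (conj φ ψ))) := by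
  intro vA vI vE vO vEp
  simp only [beval]
  cases beval vA vI vE vO vEp φ <;> cases beval vA vI vE vO vEp ψ <;> rfl

lemma taut_and1 (φ ψ : EForm) : Taut (impl (conj φ ψ) φ) := by
  intro vA vI vE vO vEp
  simp only [beval]
  cases beval vA vI vE vO vEp φ <;> cases beval vA vI vE vO vEp ψ <;> rfl

lemma taut_and2 (φ ψ : EForm) : Taut (impl (conj φ ψ) ψ) := by
  intro vA vI vE vO vEp
  simp only [beval]
  cases beval vA vI vE vO vEp φ <;> cases beval vA vI vE vO vEp ψ <;> rfl

lemma pf_conj (h1 : ProvesFrom Γ φ) (h2 : ProvesFrom Γ ψ) :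
    ProvesFrom Γ (conj φ ψ) :=
  .mp (.mp (.thm (.taut (taut_pair φ ψ))) h1) h2

lemma pf_and1 (h : ProvesFrom Γ (conj φ ψ)) : ProvesFrom Γ φ :=
  .mp (.thm (.taut (taut_and1 φ ψ))) h

lemma pf_and2 (h : ProvesFrom Γ (conj φ ψ)) : ProvesFrom Γ ψ :=
  .mp (.thm (.taut (taut_and2 φ ψ))) h

lemma pf_axAA (S : Nat) : ProvesFrom Γ (atomA S S) :=
  .thm (.ax (Or.inl ⟨S, rfl⟩))

/-- Barbara: from `M a P` and `S a M` conclude `S a P`. -/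
lemma pf_barb {M P S : Nat} (h1 : ProvesFrom Γ (atomA M P))
    (h2 : ProvesFrom Γ (atomA S M)) : ProvesFrom Γ (atomA S P) :=
  .mp (.thm (.ax (Or.inr (Or.inl ⟨M, P, S, rfl⟩)))) (pf_conj h1 h2)

/-- Datisi: from `M a P` and `M i S` conclude `S i P`. -/
lemma pf_dat {M P S : Nat} (h1 : ProvesFrom Γ (atomA M P))
    (h2 : ProvesFrom Γ (atomI M S)) : ProvesFrom Γ (atomI S P) :=
  .mp (.thm (.ax (Or.inr (Or.inr (Or.inl ⟨M, P, S, rfl⟩))))) (pf_conj h1 h2)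

/-- symmetry of `i`. -/
lemma pf_isym {S P : Nat} (h : ProvesFrom Γ (atomI S P)) :
    ProvesFrom Γ (atomI P S) :=
  pf_dat (pf_axAA S) h

lemma pf_eps_ss {S P : Nat} (h : ProvesFrom Γ (atomEps S P)) :
    ProvesFrom Γ (atomEps S S) :=
  .mp (.thm (.ax (Or.inr (Or.inr (Or.inr (Or.inr (Or.inr (Or.inr (Or.inr
    (Or.inl ⟨S, P, rfl⟩)))))))))) h

lemma pf_eps_a {S P : Nat} (h : ProvesFrom Γ (atomEps S P)) :
    ProvesFrom Γ (atomA S P) :=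
  .mp (.thm (.ax (Or.inr (Or.inr (Or.inr (Or.inr (Or.inr (Or.inr (Or.inr
    (Or.inr (Or.inl ⟨S, P, rfl⟩))))))))))) h

lemma pf_eps_i {S : Nat} (h : ProvesFrom Γ (atomEps S S)) :
    ProvesFrom Γ (atomI S S) :=
  .mp (.thm (.ax (Or.inr (Or.inr (Or.inr (Or.inr (Or.inr (Or.inr (Or.inr
    (Or.inr (Or.inr (Or.inl ⟨S, rfl⟩)))))))))))) h

/-- Ish: from `S a M`, `M ε M`, `S i P` conclude `S ε P`. -/
lemma pf_eps4 {S M P : Nat} (h1 : ProvesFrom Γ (atomA S M))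
    (h2 : ProvesFrom Γ (atomEps M M)) (h3 : ProvesFrom Γ (atomI S P)) :
    ProvesFrom Γ (atomEps S P) :=
  .mp (.thm (.ax (Or.inr (Or.inr (Or.inr (Or.inr (Or.inr (Or.inr (Or.inr
    (Or.inr (Or.inr (Or.inr ⟨S, M, P, rfl⟩))))))))))))
    (pf_conj h1 (pf_conj h2 h3))

lemma mem_of_proves (hΓ : MaxConsistent Γ) (h : ProvesFrom Γ φ) : φ ∈ Γ := by
  rcases hΓ.2 φ with h' | h'
  · exact h'
  · exact absurd ⟨φ, h, ProvesFrom.prem h'⟩ hΓ.1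

/-- congruence for `a`. -/
lemma pf_aCong {S S' P P' : Nat} (h1 : ProvesFrom Γ (atomA S' S))
    (h2 : ProvesFrom Γ (atomA P P')) (h : ProvesFrom Γ (atomA S P)) :
    ProvesFrom Γ (atomA S' P') :=
  pf_barb h2 (pf_barb h h1)

/-- congruence for `i`. -/
lemma pf_iCong {S S' P P' : Nat} (h1 : ProvesFrom Γ (atomA S S'))
    (h2 : ProvesFrom Γ (atomA P P')) (h : ProvesFrom Γ (atomI S P)) :
    ProvesFrom Γ (atomI S' P') := by
  have h3 : ProvesFrom Γ (atomI S P') := pf_dat h2 (pf_isym h)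
  exact pf_isym (pf_dat h1 h3)

/-- congruence for `ε`. -/
lemma pf_epsCong {S S' P P' : Nat} (h1 : ProvesFrom Γ (atomA S S'))
    (h1' : ProvesFrom Γ (atomA S' S)) (h2 : ProvesFrom Γ (atomA P P'))
    (h : ProvesFrom Γ (atomEps S P)) : ProvesFrom Γ (atomEps S' P') := by
  have hss : ProvesFrom Γ (atomEps S S) := pf_eps_ss h
  have hiss : ProvesFrom Γ (atomI S S) := pf_eps_i hss
  have hap : ProvesFrom Γ (atomA S P) := pf_eps_a h
  have hap' : ProvesFrom Γ (atomA S P') := pf_barb h2 hap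
  have hip' : ProvesFrom Γ (atomI S P') := pf_dat hap' hiss
  have hi' : ProvesFrom Γ (atomI S' P') := pf_isym (pf_dat h1 hip')
  exact pf_eps4 h1' hss hi'

end Aux

/-- Given a maximal consistent set `Γ` in Sh+ε, the relation
`S ∼ P := (S a P ∧ P a S) ∈ Γ` is an equivalence relation on name letters
which is a congruence with respect to the functors `a`, `i` and `ε`. -/
theorem sim_equivalence_congruence
    (Γ : Set EForm) (hΓ : MaxConsistent Γ) :
    let Sim : Nat → Nat → Prop := fun S P => conj (atomA S P) (atomA P S) ∈ Γ
    (∀ S, Sim S S) ∧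
    (∀ S P, Sim S P → Sim P S) ∧
    (∀ S P Q, Sim S P → Sim P Q → Sim S Q) ∧
    (∀ S S' P P', Sim S S' → Sim P P' →
      ((atomA S P ∈ Γ ↔ atomA S' P' ∈ Γ) ∧
       (atomI S P ∈ Γ ↔ atomI S' P' ∈ Γ) ∧
       (atomEps S P ∈ Γ ↔ atomEps S' P' ∈ Γ))) := by
  intro Sim
  have mk : ∀ S P, Sim S P → ProvesFrom Γ (atomA S P) ∧ ProvesFrom Γ (atomA P S) :=
    fun S P h => ⟨pf_and1 (.prem h), pf_and2 (.prem h)⟩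
  refine ⟨?_, ?_, ?_, ?_⟩
  · intro S
    exact mem_of_proves hΓ (pf_conj (pf_axAA S) (pf_axAA S))
  · intro S P h
    exact mem_of_proves hΓ (pf_conj (mk S P h).2 (mk S P h).1)
  · intro S P Q h1 h2
    exact mem_of_proves hΓ (pf_conj (pf_barb (mk P Q h2).1 (mk S P h1).1)
      (pf_barb (mk S P h1).2 (mk P Q h2).2))
  · intro S S' P P' h1 h2
    obtain ⟨hss', hs's⟩ := mk S S' h1
    obtain ⟨hpp', hp'p⟩ := mk P P' h2
    refine ⟨⟨?_, ?_⟩, ⟨?_, ?_⟩, ⟨?_, ?_⟩⟩ <;> intro h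
    · exact mem_of_proves hΓ (pf_aCong hs's hpp' (.prem h))
    · exact mem_of_proves hΓ (pf_aCong hss' hp'p (.prem h))
    · exact mem_of_proves hΓ (pf_iCong hss' hpp' (.prem h))
    · exact mem_of_proves hΓ (pf_iCong hs's hp'p (.prem h))
    · exact mem_of_proves hΓ (pf_epsCong hss' hs's hpp' (.prem h))
    · exact mem_of_proves hΓ (pf_epsCong hs's hss' hp'p (.prem h))
end

section
/- The system Sh+ε (Shepherdson's system with Leśniewski's copula) is sound and complete: a formula is a thesis of Sh+ε if and only if it is true in every model (U, D), where S ε P is interpreted as 'D(S) is a singleton included in D(P)'. -/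
/-!
Soundness is a routine induction on derivations. For completeness, a valid `φ` is derived by
modus ponens from the finitely many axiom instances over its letters, once the implication
"those instances → φ" is known to be a tautology. To see that, take a boolean valuation of the
atoms satisfying the instances, pull it back along a retraction of `ℕ` onto the letters, and
realise it by a canonical model: a point is a pair `u i w` (plus a tag), lying under every name
above `u` or above `w`. The tag doubles the points under a non-singular name; points under a
singular name forget it and, being recorded by the set of names above them, coincide.
-/

namespace EForm

theorem eval_rename {U : Type} (D : ℕ → Set U) (σ : ℕ → ℕ) (φ : EForm) :
    eval D (rename σ φ) ↔ eval (fun n => D (σ n)) φ := by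
  induction φ <;> simp [rename, eval, *]

open Classical in
theorem eval_iff_beval {U : Type} (D : ℕ → Set U) (φ : EForm) :
    eval D φ ↔ beval (fun s p => decide (D s ⊆ D p))
      (fun s p => decide (D s ∩ D p).Nonempty)
      (fun s p => decide ¬(D s ∩ D p).Nonempty)
      (fun s p => decide ¬D s ⊆ D p)
      (fun s p => decide (∃ x, D s = {x} ∧ x ∈ D p)) φ = true := by
  induction φ <;> simp [eval, beval, imp_iff_not_or, Bool.beq_eq_decide_eq, *]

theorem eval_of_shEpsAx {φ : EForm} (h : ShEpsAx φ) {U : Type} (D : ℕ → Set U) : eval D φ := by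
  rcases h with ⟨S, rfl⟩ | ⟨M, P, S, rfl⟩ | ⟨M, P, S, rfl⟩ | ⟨S, P, rfl⟩ | ⟨S, P, rfl⟩ |
    ⟨S, P, rfl⟩ | ⟨S, P, rfl⟩ | ⟨S, P, rfl⟩ | ⟨S, P, rfl⟩ | ⟨S, rfl⟩ | ⟨S, M, P, rfl⟩
  · exact subset_rfl
  · exact fun ⟨hMP, hSM⟩ => hSM.trans hMP
  · exact fun ⟨hMP, x, hxM, hxS⟩ => ⟨x, hxS, hMP hxM⟩
  · exact fun ⟨x, hxS, _⟩ => ⟨x, hxS, hxS⟩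
  · exact fun h x hx => absurd ⟨x, hx, hx⟩ h
  · exact Iff.rfl
  · exact Iff.rfl
  · exact fun ⟨x, hS, _⟩ => ⟨x, hS, hS ▸ rfl⟩
  · rintro ⟨x, hS, hxP⟩
    simpa [eval, hS] using hxP
  · exact fun ⟨x, hS, _⟩ => ⟨x, by simp [hS]⟩
  · rintro ⟨hSM, ⟨x, hM, -⟩, y, hyS, hyP⟩
    have hS : D S = {x} :=
      ((Set.subset_singleton_iff_eq.mp (hM ▸ hSM)).resolve_left (Set.nonempty_of_mem hyS).ne_empty)
    rw [hS] at hyS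
    exact ⟨x, hS, hyS ▸ hyP⟩

theorem Deriv.sound {φ : EForm} (h : Deriv ShEpsAx φ) (U : Type) (D : ℕ → Set U) : eval D φ := by
  induction h generalizing D with
  | ax h => exact eval_of_shEpsAx h D
  | taut h => exact (eval_iff_beval D _).mpr (h _ _ _ _ _)
  | mp _ _ ih₁ ih₂ => exact ih₁ D (ih₂ D)
  | subst σ _ ih => exact (eval_rename D σ _).mpr (ih _)

def letters : EForm → List ℕ
  | atomA s p | atomI s p | atomE s p | atomO s p | atomEps s p => [s, p]
  | neg φ => letters φ
  | conj φ ψ | disj φ ψ | impl φ ψ | equiv φ ψ => letters φ ++ letters ψ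

theorem rename_eq_self {σ : ℕ → ℕ} {φ : EForm} (h : ∀ n ∈ letters φ, σ n = n) :
    rename σ φ = φ := by
  induction φ <;> simp_all [rename, letters]

theorem beval_rename (vA vI vE vO vEp : ℕ → ℕ → Bool) (σ : ℕ → ℕ) (φ : EForm) :
    beval vA vI vE vO vEp (rename σ φ) =
      beval (fun s p => vA (σ s) (σ p)) (fun s p => vI (σ s) (σ p)) (fun s p => vE (σ s) (σ p))
        (fun s p => vO (σ s) (σ p)) (fun s p => vEp (σ s) (σ p)) φ := by
  induction φ <;> simp [rename, beval, *]

theorem beval_foldr_impl (vA vI vE vO vEp : ℕ → ℕ → Bool) (l : List EForm) (φ : EForm) :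
    beval vA vI vE vO vEp (l.foldr impl φ) = true ↔
      ((∀ ψ ∈ l, beval vA vI vE vO vEp ψ = true) → beval vA vI vE vO vEp φ = true) := by
  induction l with
  | nil => simp
  | cons ψ l ih => simp [beval, ih, imp_iff_not_or, or_assoc]

theorem Deriv.of_foldr_impl {Ax : EForm → Prop} {l : List EForm} {φ : EForm}
    (h : Deriv Ax (l.foldr impl φ)) (hl : ∀ ψ ∈ l, Deriv Ax ψ) : Deriv Ax φ := by
  induction l with
  | nil => exact h
  | cons ψ l ih =>
    exact ih (h.mp (hl ψ List.mem_cons_self)) fun χ hχ => hl χ (List.mem_cons_of_mem _ hχ)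

def axiomsAt (S M P : ℕ) : List EForm :=
  [atomA S S,
   impl (conj (atomA M P) (atomA S M)) (atomA S P),
   impl (conj (atomA M P) (atomI M S)) (atomI S P),
   impl (atomI S P) (atomI S S),
   impl (neg (atomI S S)) (atomA S P),
   equiv (atomE S P) (neg (atomI S P)),
   equiv (atomO S P) (neg (atomA S P)),
   impl (atomEps S P) (atomEps S S),
   impl (atomEps S P) (atomA S P),
   impl (atomEps S S) (atomI S S),
   impl (conj (atomA S M) (conj (atomEps M M) (atomI S P))) (atomEps S P)]

theorem shEpsAx_of_mem_axiomsAt {S M P : ℕ} {ψ : EForm} (h : ψ ∈ axiomsAt S M P) : ShEpsAx ψ := by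
  simp only [axiomsAt, List.mem_cons, List.not_mem_nil, or_false] at h
  rcases h with rfl | rfl | rfl | rfl | rfl | rfl | rfl | rfl | rfl | rfl | rfl <;> simp [ShEpsAx]

theorem map_rename_axiomsAt (σ : ℕ → ℕ) (S M P : ℕ) :
    (axiomsAt S M P).map (rename σ) = axiomsAt (σ S) (σ M) (σ P) := rfl

def axiomInstances (L : List ℕ) : List EForm :=
  L.flatMap fun S => L.flatMap fun M => L.flatMap fun P => axiomsAt S M P

theorem mem_axiomInstances {L : List ℕ} {ψ : EForm} :
    ψ ∈ axiomInstances L ↔ ∃ S ∈ L, ∃ M ∈ L, ∃ P ∈ L, ψ ∈ axiomsAt S M P := by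
  simp [axiomInstances]

theorem exists_retraction_onto {L : List ℕ} (hL : L ≠ []) :
    ∃ ρ : ℕ → ℕ, (∀ n, ρ n ∈ L) ∧ ∀ n ∈ L, ρ n = n := by
  classical
  obtain ⟨a, ha⟩ := List.exists_mem_of_ne_nil L hL
  refine ⟨fun n => if n ∈ L then n else a, fun n => ?_, fun n hn => if_pos hn⟩
  dsimp only
  split_ifs with hn <;> assumption

section CanonicalModel

structure IsShEpsValuation (vA vI vE vO vEp : ℕ → ℕ → Bool) : Prop where
  a_self : ∀ s, vA s s = true
  barbara : ∀ {m p s}, vA m p = true → vA s m = true → vA s p = true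
  datisi : ∀ {m p s}, vA m p = true → vI m s = true → vI s p = true
  i_self_of_i : ∀ {s p}, vI s p = true → vI s s = true
  a_of_not_i_self : ∀ {s p}, vI s s = false → vA s p = true
  e_eq : ∀ s p, vE s p = !vI s p
  o_eq : ∀ s p, vO s p = !vA s p
  eps_self_of_eps : ∀ {s p}, vEp s p = true → vEp s s = true
  a_of_eps : ∀ {s p}, vEp s p = true → vA s p = true
  i_self_of_eps_self : ∀ {s}, vEp s s = true → vI s s = true
  eps_of_a_of_i : ∀ {s m p}, vA s m = true → vEp m m = true → vI s p = true → vEp s p = true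

variable {vA vI vE vO vEp : ℕ → ℕ → Bool}

namespace IsShEpsValuation

theorem of_axiomsAt (h : ∀ S M P, ∀ ψ ∈ axiomsAt S M P, beval vA vI vE vO vEp ψ = true) :
    IsShEpsValuation vA vI vE vO vEp := by
  have h' := fun S M P => by simpa [axiomsAt, beval] using h S M P
  constructor
  · exact fun s => (h' s s s).1
  · intro m p s hmp hsm; have := h' s m p; simp_all
  · intro m p s hmp hms; have := h' s m p; simp_all
  · intro s p hsp; have := h' s s p; simp_all
  · intro s p hss; have := h' s s p; simp_all
  · exact fun s p => (h' s s p).2.2.2.2.2.1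
  · exact fun s p => (h' s s p).2.2.2.2.2.2.1
  · intro s p hsp; have := h' s s p; simp_all
  · intro s p hsp; have := h' s s p; simp_all
  · intro s hss; have := h' s s s; simp_all
  · intro s m p hsm hmm hsp; have := h' s m p; simp_all

theorem i_symm (hv : IsShEpsValuation vA vI vE vO vEp) {u w : ℕ} (h : vI u w = true) :
    vI w u = true :=
  hv.datisi (hv.a_self u) h

theorem a_of_eps_self_of_a (hv : IsShEpsValuation vA vI vE vO vEp) {u w r : ℕ}
    (huw : vI u w = true) (hr : vEp r r = true) (hur : vA u r = true) :
    vA r u = true ∧ vA r w = true := by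
  have hru : vA r u = true :=
    hv.a_of_eps (hv.eps_of_a_of_i (hv.a_self r) hr
      (hv.i_symm (hv.datisi hur (hv.i_self_of_i huw))))
  exact ⟨hru, hv.barbara (hv.a_of_eps (hv.eps_of_a_of_i hur hr huw)) hru⟩

end IsShEpsValuation

def above (vA : ℕ → ℕ → Bool) (u w : ℕ) : Set ℕ := {s | vA u s = true ∨ vA w s = true}

theorem IsShEpsValuation.i_of_mem_above (hv : IsShEpsValuation vA vI vE vO vEp) {u w s p : ℕ}
    (huw : vI u w = true) (hs : s ∈ above vA u w) (hp : p ∈ above vA u w) : vI s p = true := by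
  have hwu := hv.i_symm huw
  rcases hs with hus | hws <;> rcases hp with hup | hwp
  · exact hv.datisi hup (hv.datisi hus (hv.i_self_of_i huw))
  · exact hv.datisi hwp (hv.datisi hus huw)
  · exact hv.datisi hup (hv.datisi hws hwu)
  · exact hv.datisi hwp (hv.datisi hws (hv.i_self_of_i hwu))

theorem IsShEpsValuation.above_eq_of_eps_self (hv : IsShEpsValuation vA vI vE vO vEp)
    {u w r : ℕ} (huw : vI u w = true) (hr : vEp r r = true) (hruw : r ∈ above vA u w) :
    above vA u w = above vA r r := by
  obtain ⟨hru, hrw⟩ : vA r u = true ∧ vA r w = true := by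
    rcases hruw with hur | hwr
    · exact hv.a_of_eps_self_of_a huw hr hur
    · exact (hv.a_of_eps_self_of_a (hv.i_symm huw) hr hwr).symm
  refine Set.ext fun p => ?_
  change vA u p = true ∨ vA w p = true ↔ vA r p = true ∨ vA r p = true
  rw [or_self]
  refine ⟨fun h => h.elim (hv.barbara · hru) (hv.barbara · hrw), fun hrp => ?_⟩
  exact hruw.imp (hv.barbara hrp) (hv.barbara hrp)

open Classical in
noncomputable def point (vA vEp : ℕ → ℕ → Bool) (u w : ℕ) (b : Bool) : Set ℕ × Bool :=
  (above vA u w, if ∃ r ∈ above vA u w, vEp r r = true then false else b)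

def canonicalModel (vA vI vEp : ℕ → ℕ → Bool) (s : ℕ) : Set (Set ℕ × Bool) :=
  {x | s ∈ x.1 ∧ ∃ u w b, vI u w = true ∧ point vA vEp u w b = x}

theorem point_mem_canonicalModel {u w s : ℕ} {b : Bool} (huw : vI u w = true) :
    point vA vEp u w b ∈ canonicalModel vA vI vEp s ↔ s ∈ above vA u w :=
  ⟨And.left, fun hs => ⟨hs, u, w, b, huw, rfl⟩⟩

theorem IsShEpsValuation.canonicalModel_subset_iff (hv : IsShEpsValuation vA vI vE vO vEp)
    (s p : ℕ) : canonicalModel vA vI vEp s ⊆ canonicalModel vA vI vEp p ↔ vA s p = true := by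
  constructor
  · intro hsp
    cases hss : vI s s
    · exact hv.a_of_not_i_self hss
    exact ((point_mem_canonicalModel (b := false) hss).1
      (hsp ((point_mem_canonicalModel hss).2 (Or.inl (hv.a_self s))))).elim id id
  · rintro hsp _ ⟨hs, u, w, b, huw, rfl⟩
    exact (point_mem_canonicalModel huw).2 (hs.imp (hv.barbara hsp) (hv.barbara hsp))

theorem IsShEpsValuation.canonicalModel_inter_nonempty_iff
    (hv : IsShEpsValuation vA vI vE vO vEp) (s p : ℕ) :
    (canonicalModel vA vI vEp s ∩ canonicalModel vA vI vEp p).Nonempty ↔ vI s p = true := by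
  refine ⟨?_, fun hsp => ⟨point vA vEp s p false, ?_, ?_⟩⟩
  · rintro ⟨_, ⟨hs, u, w, b, huw, rfl⟩, hp, -⟩
    exact hv.i_of_mem_above huw hs hp
  · exact (point_mem_canonicalModel hsp).2 (Or.inl (hv.a_self s))
  · exact (point_mem_canonicalModel hsp).2 (Or.inr (hv.a_self p))

theorem IsShEpsValuation.canonicalModel_eps_iff (hv : IsShEpsValuation vA vI vE vO vEp)
    (s p : ℕ) :
    (∃ x, canonicalModel vA vI vEp s = {x} ∧ x ∈ canonicalModel vA vI vEp p) ↔
      vEp s p = true := by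
  constructor
  · rintro ⟨x, hs, hxp⟩
    have hxs : x ∈ canonicalModel vA vI vEp s := hs ▸ rfl
    have hss : vI s s = true := by
      obtain ⟨hsx, u, w, b, huw, rfl⟩ := hxs
      exact hv.i_of_mem_above huw hsx hsx
    have hsp : vI s p = true := (hv.canonicalModel_inter_nonempty_iff s p).1 ⟨x, hxs, hxp⟩
    -- otherwise the two tags of the points over `(s, s)` would give two elements
    obtain ⟨r, hsr, hr⟩ : ∃ r ∈ above vA s s, vEp r r = true := by
      by_contra hno
      have hmem : ∀ b, point vA vEp s s b ∈ canonicalModel vA vI vEp s := fun b =>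
        (point_mem_canonicalModel hss).2 (Or.inl (hv.a_self s))
      have htag : ∀ b, (point vA vEp s s b).2 = b := fun b => if_neg hno
      have := (hs ▸ hmem false : _ = x).trans (hs ▸ hmem true : _ = x).symm
      simpa [htag] using congrArg Prod.snd this
    exact hv.eps_of_a_of_i (hsr.elim id id) hr hsp
  · intro hsp
    have hs : vEp s s = true := hv.eps_self_of_eps hsp
    have hss : vI s s = true := hv.i_self_of_eps_self hs
    refine ⟨point vA vEp s s false, Set.eq_singleton_iff_unique_mem.2 ⟨?_, ?_⟩, ?_⟩
    · exact (point_mem_canonicalModel hss).2 (Or.inl (hv.a_self s))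
    · rintro _ ⟨hsuw, u, w, b, huw, rfl⟩
      have hcol : ∃ r ∈ above vA s s, vEp r r = true := ⟨s, Or.inl (hv.a_self s), hs⟩
      unfold point
      rw [hv.above_eq_of_eps_self huw hs hsuw, if_pos hcol, if_pos hcol]
    · exact (point_mem_canonicalModel hss).2 (Or.inl (hv.a_of_eps hsp))

theorem IsShEpsValuation.eval_canonicalModel (hv : IsShEpsValuation vA vI vE vO vEp)
    (φ : EForm) : eval (canonicalModel vA vI vEp) φ ↔ beval vA vI vE vO vEp φ = true := by
  induction φ with
  | atomA s p => exact hv.canonicalModel_subset_iff s p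
  | atomI s p => exact hv.canonicalModel_inter_nonempty_iff s p
  | atomE s p => simp [eval, beval, hv.e_eq, hv.canonicalModel_inter_nonempty_iff]
  | atomO s p => simp [eval, beval, hv.o_eq, hv.canonicalModel_subset_iff]
  | atomEps s p => exact hv.canonicalModel_eps_iff s p
  | _ => simp [eval, beval, imp_iff_not_or, Bool.beq_eq_decide_eq, *]

end CanonicalModel

theorem taut_axiomInstances_foldr_impl {φ : EForm}
    (hφ : ∀ (U : Type) (D : ℕ → Set U), eval D φ) :
    Taut ((axiomInstances (0 :: letters φ)).foldr impl φ) := by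
  intro vA vI vE vO vEp
  rw [beval_foldr_impl]
  intro hax
  obtain ⟨ρ, hρL, hρ⟩ := exists_retraction_onto (List.cons_ne_nil 0 (letters φ))
  have hv : IsShEpsValuation (fun s p => vA (ρ s) (ρ p)) (fun s p => vI (ρ s) (ρ p))
      (fun s p => vE (ρ s) (ρ p)) (fun s p => vO (ρ s) (ρ p)) (fun s p => vEp (ρ s) (ρ p)) :=
    .of_axiomsAt fun S M P ψ hψ => by
      rw [← beval_rename]
      refine hax _ (mem_axiomInstances.2 ⟨_, hρL S, _, hρL M, _, hρL P, ?_⟩)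
      exact map_rename_axiomsAt ρ S M P ▸ List.mem_map_of_mem hψ
  rw [← rename_eq_self fun n hn => hρ n (List.mem_cons_of_mem 0 hn), beval_rename]
  exact (hv.eval_canonicalModel φ).1 (hφ _ _)

theorem Deriv.complete {φ : EForm} (hφ : ∀ (U : Type) (D : ℕ → Set U), eval D φ) :
    Deriv ShEpsAx φ := by
  refine (Deriv.taut (taut_axiomInstances_foldr_impl hφ)).of_foldr_impl fun ψ hψ => ?_
  obtain ⟨S, -, M, -, P, -, h⟩ := mem_axiomInstances.1 hψ
  exact .ax (shEpsAx_of_mem_axiomsAt h)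

end EForm

open EForm

/-- Sh+ε (Shepherdson's system with Leśniewski's copula) is sound and
complete: a formula is a thesis of Sh+ε iff it is true in every model
`(U, D)`, where `S ε P` is interpreted as `D S` being a singleton included
in `D P`. -/
theorem sh_eps_sound_complete (φ : EForm) :
    Deriv ShEpsAx φ ↔ ∀ (U : Type) (D : Nat → Set U), eval D φ :=
  ⟨Deriv.sound, Deriv.complete⟩
end
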